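/- Fix n ≥ 1, ℏ > 0, a symmetric K ∈ M_n(ℂ) and a skew-symmetric J ∈ M_n(ℂ), and set Λ = K + J. For all a, b ∈ ℂⁿ, the multiplicative commutator E(−b) *_Λ E(−a) *_Λ E(b) *_Λ E(a) equals the constant function exp((1/(iℏ))·bJaᵀ). In particular it is a central scalar independent of the expression parameter K. -/

import Mathlib

open Matrix

/-- Partial derivative `∂_{u_i}` of a function on `ℂⁿ`. -/
noncomputable def pd (n : ℕ) (i : Fin n) (f : (Fin n → ℂ) → ℂ) : (Fin n → ℂ) → ℂ :=
  fun u => fderiv ℂ f u (Pi.single i 1)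

/-- Iterated partial derivatives along a list of indices. -/
noncomputable def iterPd (n : ℕ) (l : List (Fin n)) (f : (Fin n → ℂ) → ℂ) :
    (Fin n → ℂ) → ℂ :=
  l.foldr (pd n) f

/-- The `k`-th term of the `Λ`-product series of `f` and `g` at the point `u`. -/
noncomputable def starTerm (ℏ : ℝ) (n : ℕ) (Λ : Matrix (Fin n) (Fin n) ℂ)
    (f g : (Fin n → ℂ) → ℂ) (u : Fin n → ℂ) (k : ℕ) : ℂ :=
  ((Complex.I * ℏ) ^ k / ((k.factorial : ℂ) * 2 ^ k)) *
    ∑ i : Fin k → Fin n, ∑ j : Fin k → Fin n,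
      (∏ t, Λ (i t) (j t)) *
        (iterPd n (List.ofFn i) f u * iterPd n (List.ofFn j) g u)

/-- The `Λ`-product of two functions on `ℂⁿ` (pointwise sum of the series). -/
noncomputable def starMul (ℏ : ℝ) (n : ℕ) (Λ : Matrix (Fin n) (Fin n) ℂ)
    (f g : (Fin n → ℂ) → ℂ) : (Fin n → ℂ) → ℂ :=
  fun u => ∑' k : ℕ, starTerm ℏ n Λ f g u k

/-- The `K`-ordered expression of the star-exponential `e_*^{(1/(iℏ))⟨a,u⟩}`. -/
noncomputable def Efun (ℏ : ℝ) (n : ℕ) (K : Matrix (Fin n) (Fin n) ℂ)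
    (a : Fin n → ℂ) : (Fin n → ℂ) → ℂ :=
  fun u => Complex.exp ((1 / (4 * (Complex.I * ℏ))) * (∑ i, ∑ j, a i * K i j * a j) +
    (1 / (Complex.I * ℏ)) * ∑ i, a i * u i)

/-!
Each `E(a)` is a plane wave `u ↦ exp (c + ⟨v, u⟩ / (iℏ))`, on which `∂_{u_i}` acts as
multiplication by `v_i / (iℏ)`. Hence the `k`-th term of the `Λ`-product of two plane waves with
frequencies `v, w` is `(vΛwᵀ / (2iℏ))ᵏ / k!` times their product, and summing the exponential
series, the product is again a plane wave, with frequency `v + w` and constant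
`c + d + vΛwᵀ / (2iℏ)`. In the commutator the frequencies cancel, and the constants add up to
`(bΛaᵀ - aΛbᵀ - aΛaᵀ - bΛbᵀ) / (2iℏ)` plus the normalisations `(aKaᵀ + bKbᵀ) / (2iℏ)` of the
four factors. The symmetric part `K` of `Λ` cancels against the latter, and the skew part `J`
contributes `2 bJaᵀ`.
-/

lemma Finset.sum_sum_prod_eq_pow {ι R : Type*} [Fintype ι] [CommSemiring R] (k : ℕ)
    (F : ι → ι → R) :
    ∑ i : Fin k → ι, ∑ j : Fin k → ι, ∏ t, F (i t) (j t) = (∑ x, ∑ y, F x y) ^ k := by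
  classical
  rw [Fintype.sum_pow]
  exact Fintype.sum_congr _ _ fun i => (Fintype.prod_sum fun t y => F (i t) y).symm

lemma Matrix.sum_sum_mul_mul_eq_dotProduct_mulVec {ι R : Type*} [Fintype ι] [CommSemiring R]
    (M : Matrix ι ι R) (x y : ι → R) :
    ∑ i, ∑ j, x i * M i j * y j = x ⬝ᵥ M *ᵥ y := by
  classical
  rw [← Matrix.toBilin'_apply, Matrix.toBilin'_apply']

lemma pd_const_smul (n : ℕ) (i : Fin n) (s : ℂ) (f : (Fin n → ℂ) → ℂ) :
    pd n i (s • f) = s • pd n i f := by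
  funext u
  simp only [pd, fderiv_const_smul_field, Pi.smul_apply, _root_.smul_apply]

noncomputable def planeWave (ℏ : ℝ) (n : ℕ) (c : ℂ) (v : Fin n → ℂ) : (Fin n → ℂ) → ℂ :=
  fun u => Complex.exp (c + 1 / (Complex.I * ℏ) * (v ⬝ᵥ u))

section PlaneWave

variable {ℏ : ℝ} {n : ℕ}

lemma Efun_eq_planeWave (K : Matrix (Fin n) (Fin n) ℂ) (a : Fin n → ℂ) :
    Efun ℏ n K a = planeWave ℏ n (1 / (4 * (Complex.I * ℏ)) * (a ⬝ᵥ K *ᵥ a)) a := by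
  rw [← Matrix.sum_sum_mul_mul_eq_dotProduct_mulVec]
  rfl

lemma pd_planeWave (i : Fin n) (c : ℂ) (v : Fin n → ℂ) :
    pd n i (planeWave ℏ n c v) = (1 / (Complex.I * ℏ) * v i) • planeWave ℏ n c v := by
  funext u
  have hdot : HasFDerivAt (fun u : Fin n → ℂ => v ⬝ᵥ u)
      (∑ t, v t • ContinuousLinearMap.proj t) u :=
    HasFDerivAt.fun_sum fun t _ => (hasFDerivAt_apply (𝕜 := ℂ) t u).const_mul (v t)
  unfold pd planeWave
  rw [(((hdot.const_mul _).const_add c).cexp).fderiv]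
  simp only [_root_.smul_apply, _root_.sum_apply, ContinuousLinearMap.proj_apply, Pi.single_apply,
    smul_eq_mul, mul_ite, mul_one, mul_zero, Finset.sum_ite_eq', Finset.mem_univ, if_true,
    Pi.smul_apply]
  ring

lemma iterPd_planeWave (l : List (Fin n)) (c : ℂ) (v : Fin n → ℂ) :
    iterPd n l (planeWave ℏ n c v)
      = (l.map fun i => 1 / (Complex.I * ℏ) * v i).prod • planeWave ℏ n c v := by
  induction l with
  | nil => simp [iterPd]
  | cons i l ih =>
    change pd n i (iterPd n l _) = _
    rw [ih, pd_const_smul, pd_planeWave, smul_smul, List.map_cons, List.prod_cons, mul_comm]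

lemma iterPd_planeWave_ofFn {k : ℕ} (i : Fin k → Fin n) (c : ℂ) (v : Fin n → ℂ) :
    iterPd n (List.ofFn i) (planeWave ℏ n c v)
      = (∏ t, 1 / (Complex.I * ℏ) * v (i t)) • planeWave ℏ n c v := by
  rw [iterPd_planeWave, List.map_ofFn, List.prod_ofFn]
  rfl

lemma starTerm_planeWave (hℏ : ℏ ≠ 0) (Λ : Matrix (Fin n) (Fin n) ℂ) (c d : ℂ)
    (v w u : Fin n → ℂ) (k : ℕ) :
    starTerm ℏ n Λ (planeWave ℏ n c v) (planeWave ℏ n d w) u k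
      = (1 / (2 * (Complex.I * ℏ)) * (v ⬝ᵥ Λ *ᵥ w)) ^ k / k.factorial *
          (planeWave ℏ n c v u * planeWave ℏ n d w u) := by
  rw [starTerm]
  simp only [iterPd_planeWave_ofFn, Pi.smul_apply, smul_eq_mul]
  set α : ℂ := 1 / (Complex.I * ℏ)
  have hα : Complex.I * ℏ * α ^ 2 = α := by
    have : Complex.I * ℏ ≠ 0 := mul_ne_zero Complex.I_ne_zero (Complex.ofReal_ne_zero.mpr hℏ)
    simp only [α]
    field_simp
  have hsum : ∑ x, ∑ y, Λ x y * (α * v x) * (α * w y) = α ^ 2 * (v ⬝ᵥ Λ *ᵥ w) := by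
    simp only [dotProduct, mulVec, Finset.mul_sum]
    exact Fintype.sum_congr _ _ fun x => Fintype.sum_congr _ _ fun y => by ring
  have hterm : ∀ i j : Fin k → Fin n,
      (∏ t, Λ (i t) (j t)) * ((∏ t, α * v (i t)) * planeWave ℏ n c v u *
        ((∏ t, α * w (j t)) * planeWave ℏ n d w u))
      = (∏ t, Λ (i t) (j t) * (α * v (i t)) * (α * w (j t))) *
          (planeWave ℏ n c v u * planeWave ℏ n d w u) := by
    intro i j
    simp only [Finset.prod_mul_distrib]
    ring
  have hhalf : 1 / (2 * (Complex.I * ℏ)) = Complex.I * ℏ * α ^ 2 * 2⁻¹ := by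
    rw [hα]
    ring
  simp only [hterm, ← Finset.sum_mul]
  rw [Finset.sum_sum_prod_eq_pow k fun x y => Λ x y * (α * v x) * (α * w y), hsum, hhalf]
  simp only [mul_pow, inv_pow, div_eq_mul_inv, mul_inv]
  ring

lemma starMul_planeWave (hℏ : ℏ ≠ 0) (Λ : Matrix (Fin n) (Fin n) ℂ) (c d : ℂ)
    (v w : Fin n → ℂ) :
    starMul ℏ n Λ (planeWave ℏ n c v) (planeWave ℏ n d w)
      = planeWave ℏ n (c + d + 1 / (2 * (Complex.I * ℏ)) * (v ⬝ᵥ Λ *ᵥ w)) (v + w) := by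
  funext u
  simp only [starMul, starTerm_planeWave hℏ, tsum_mul_right]
  rw [(NormedSpace.expSeries_div_hasSum_exp _).tsum_eq, ← Complex.exp_eq_exp_ℂ, planeWave,
    planeWave, planeWave, ← Complex.exp_add, ← Complex.exp_add, add_dotProduct]
  ring_nf

lemma starMul_commutator_planeWave (hℏ : ℏ ≠ 0) (Λ : Matrix (Fin n) (Fin n) ℂ)
    (c₁ c₂ c₃ c₄ : ℂ) (a b : Fin n → ℂ) :
    starMul ℏ n Λ
        (starMul ℏ n Λ (starMul ℏ n Λ (planeWave ℏ n c₁ (-b)) (planeWave ℏ n c₂ (-a)))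
          (planeWave ℏ n c₃ b))
        (planeWave ℏ n c₄ a)
      = fun _ => Complex.exp (c₁ + c₂ + c₃ + c₄ + 1 / (2 * (Complex.I * ℏ)) *
          (b ⬝ᵥ Λ *ᵥ a - a ⬝ᵥ Λ *ᵥ b - a ⬝ᵥ Λ *ᵥ a - b ⬝ᵥ Λ *ᵥ b)) := by
  simp only [starMul_planeWave hℏ, neg_add_cancel_comm, neg_add_cancel]
  funext u
  simp only [planeWave, zero_dotProduct, add_dotProduct, neg_dotProduct, mulVec_neg,
    dotProduct_neg]
  ring_nf

end PlaneWave

theorem statement16_general (n : ℕ) (ℏ : ℝ) (hℏ : 0 < ℏ)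
    (K J : Matrix (Fin n) (Fin n) ℂ) (hK : Kᵀ = K) (hJ : Jᵀ = -J)
    (a b : Fin n → ℂ) :
    -- the multiplicative commutator E(−b) * E(−a) * E(b) * E(a) is the constant
    -- exp((1/(iℏ))·bJaᵀ), independent of the expression parameter K
    starMul ℏ n (K + J)
        (starMul ℏ n (K + J)
          (starMul ℏ n (K + J) (Efun ℏ n K (-b)) (Efun ℏ n K (-a)))
          (Efun ℏ n K b))
        (Efun ℏ n K a)
      = fun _ => Complex.exp ((1 / (Complex.I * ℏ)) * ∑ i, ∑ j, b i * J i j * a j) := by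
  have hK_symm : a ⬝ᵥ K *ᵥ b = b ⬝ᵥ K *ᵥ a := by
    rw [← dotProduct_transpose_mulVec, hK]
  have hJ_skew : ∀ x y : Fin n → ℂ, x ⬝ᵥ J *ᵥ y = -(y ⬝ᵥ J *ᵥ x) := fun x y => by
    rw [← dotProduct_transpose_mulVec, hJ, neg_mulVec, dotProduct_neg]
  have hJ_self : ∀ x : Fin n → ℂ, x ⬝ᵥ J *ᵥ x = 0 := fun x =>
    self_eq_neg.mp (hJ_skew x x)
  simp only [Efun_eq_planeWave, starMul_commutator_planeWave hℏ.ne',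
    Matrix.sum_sum_mul_mul_eq_dotProduct_mulVec]
  funext
  congr 1
  simp only [add_mulVec, dotProduct_add, neg_dotProduct, mulVec_neg, dotProduct_neg, neg_neg,
    hK_symm, hJ_skew a b, hJ_self]
  ring

theorem statement16 (n : ℕ) (hn : 1 ≤ n) (ℏ : ℝ) (hℏ : 0 < ℏ)
    (K J : Matrix (Fin n) (Fin n) ℂ) (hK : Kᵀ = K) (hJ : Jᵀ = -J)
    (a b : Fin n → ℂ) :
    -- the multiplicative commutator E(−b) * E(−a) * E(b) * E(a) is the constant
    -- exp((1/(iℏ))·bJaᵀ), independent of the expression parameter K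
    starMul ℏ n (K + J)
        (starMul ℏ n (K + J)
          (starMul ℏ n (K + J) (Efun ℏ n K (-b)) (Efun ℏ n K (-a)))
          (Efun ℏ n K b))
        (Efun ℏ n K a)
      = fun _ => Complex.exp ((1 / (Complex.I * ℏ)) * ∑ i, ∑ j, b i * J i j * a j) :=
  statement16_general n ℏ hℏ K J hK hJ a b
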